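/- arXiv:2003.13293 — 2 statements merged into one kernel-verified Lean document; each statement's English description precedes it below -/
import Mathlib

section
/- Let q be a prime power and let M : F_q^n × F_q^{n'} × F_q^h → F_q^{h'} be a linear map. The following three conditions are equivalent: (1) for every b ∈ F_q^{n'} there exists a function f_b : F_q^{h'} → F_q^n such that f_b(M(a,b,c)) = a for all a ∈ F_q^n and c ∈ F_q^h; (2) there exists a function f₀ : F_q^{h'} → F_q^n such that f₀(M(a,0,c)) = a for all a ∈ F_q^n and c ∈ F_q^h; (3) there exist linear maps 𝔐₁ : F_q^{h'} → F_q^n and 𝔐₂ : F_q^{n'} → F_q^n such that 𝔐₁(M(a,b,c)) = a + 𝔐₂(b) for all a ∈ F_q^n, b ∈ F_q^{n'}, c ∈ F_q^h. -/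
/-- Equivalence of the three recoverability conditions: (1) a decoder exists for
every value of the shared randomness, (2) a decoder exists for zero shared
randomness, (3) a linear decoder exists. -/
theorem stmt_4 {F : Type*} [Field F] [Fintype F] [DecidableEq F]
    (q : ℕ) (hq : IsPrimePow q) (hcard : Fintype.card F = q)
    {n n' h h' : ℕ}
    (M : ((Fin n → F) × (Fin n' → F) × (Fin h → F)) →ₗ[F] (Fin h' → F)) :
    ((∀ b : Fin n' → F, ∃ f : (Fin h' → F) → (Fin n → F),
        ∀ (a : Fin n → F) (c : Fin h → F), f (M (a, b, c)) = a)
      ↔ (∃ f : (Fin h' → F) → (Fin n → F),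
        ∀ (a : Fin n → F) (c : Fin h → F), f (M (a, 0, c)) = a)) ∧
    ((∃ f : (Fin h' → F) → (Fin n → F),
        ∀ (a : Fin n → F) (c : Fin h → F), f (M (a, 0, c)) = a)
      ↔ (∃ (𝔐₁ : (Fin h' → F) →ₗ[F] (Fin n → F))
            (𝔐₂ : (Fin n' → F) →ₗ[F] (Fin n → F)),
          ∀ (a : Fin n → F) (b : Fin n' → F) (c : Fin h → F),
            𝔐₁ (M (a, b, c)) = a + 𝔐₂ b)) := by
  classical
  -- Key implication: (2) → (3)
  have key : (∃ f : (Fin h' → F) → (Fin n → F),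
        ∀ (a : Fin n → F) (c : Fin h → F), f (M (a, 0, c)) = a) →
      (∃ (𝔐₁ : (Fin h' → F) →ₗ[F] (Fin n → F))
          (𝔐₂ : (Fin n' → F) →ₗ[F] (Fin n → F)),
        ∀ (a : Fin n → F) (b : Fin n' → F) (c : Fin h → F),
          𝔐₁ (M (a, b, c)) = a + 𝔐₂ b) := by
    rintro ⟨f, hf⟩
    -- the linear map (a, c) ↦ M (a, 0, c)
    let ι : ((Fin n → F) × (Fin h → F)) →ₗ[F]
        ((Fin n → F) × (Fin n' → F) × (Fin h → F)) :=
      LinearMap.prod (LinearMap.fst F _ _) (LinearMap.prod 0 (LinearMap.snd F _ _))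
    let L : ((Fin n → F) × (Fin h → F)) →ₗ[F] (Fin h' → F) := M ∘ₗ ι
    have hLval : ∀ (a : Fin n → F) (c : Fin h → F), L (a, c) = M (a, 0, c) := by
      intro a c; rfl
    have hfL : ∀ x : (Fin n → F) × (Fin h → F), f (L x) = x.1 := by
      rintro ⟨a, c⟩; rw [hLval]; exact hf a c
    have hker : ∀ x : (Fin n → F) × (Fin h → F), L x = 0 → x.1 = 0 := by
      intro x hx
      have h0 : f (L 0) = ((0 : (Fin n → F) × (Fin h → F))).1 := hfL 0
      rw [map_zero] at h0
      calc x.1 = f (L x) := (hfL x).symm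
        _ = f 0 := by rw [hx]
        _ = 0 := h0
    -- split the surjection onto the range of L
    obtain ⟨r, hr⟩ := L.rangeRestrict.exists_rightInverse_of_surjective
      L.range_rangeRestrict
    -- extend π ∘ r from range L to all of F^{h'}
    obtain ⟨g, hg⟩ := LinearMap.exists_extend ((LinearMap.fst F (Fin n → F) (Fin h → F)) ∘ₗ r)
    have hgL : ∀ x : (Fin n → F) × (Fin h → F), g (L x) = x.1 := by
      intro x
      have h1 : g (L x) = (r (L.rangeRestrict x)).1 := by
        have he : L x = (LinearMap.range L).subtype (L.rangeRestrict x) := rfl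
        rw [he, ← LinearMap.comp_apply, hg]; rfl
      have h2 : L (r (L.rangeRestrict x)) = L x := by
        simpa using congrArg Subtype.val (LinearMap.congr_fun hr (L.rangeRestrict x))
      have h3 : L (r (L.rangeRestrict x) - x) = 0 := by
        rw [map_sub, h2, sub_self]
      have h4 : (r (L.rangeRestrict x)).1 - x.1 = 0 := hker _ h3
      rw [h1, ← sub_eq_zero]
      exact h4
    -- the inclusion b ↦ (0, b, 0)
    let κ : (Fin n' → F) →ₗ[F] ((Fin n → F) × (Fin n' → F) × (Fin h → F)) :=
      LinearMap.prod 0 (LinearMap.prod LinearMap.id 0)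
    refine ⟨g, g ∘ₗ M ∘ₗ κ, fun a b c => ?_⟩
    have hsplit : ((a, b, c) : (Fin n → F) × (Fin n' → F) × (Fin h → F))
        = (a, 0, c) + (0, b, 0) := by
      simp [Prod.ext_iff]
    rw [hsplit, map_add, map_add]
    have h1 : g (M (a, 0, c)) = a := by rw [← hLval]; exact hgL (a, c)
    have h2 : (g ∘ₗ M ∘ₗ κ) b = g (M (0, b, 0)) := rfl
    rw [h1, h2]
  constructor
  · constructor
    · intro H
      obtain ⟨f, hfb⟩ := H 0
      exact ⟨f, hfb⟩
    · intro h2 b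
      obtain ⟨𝔐₁, 𝔐₂, h3⟩ := key h2
      refine ⟨fun y => 𝔐₁ y - 𝔐₂ b, fun a c => ?_⟩
      show 𝔐₁ (M (a, b, c)) - 𝔐₂ b = a
      rw [h3 a b c]; abel
  · constructor
    · exact key
    · rintro ⟨𝔐₁, 𝔐₂, h3⟩
      exact ⟨𝔐₁, fun a c => by simpa using h3 a 0 c⟩
end

section
/- Let q be a prime power, let M₁ : F_q^n → F_q^h and M₂ : F_q^{n'} → F_q^h be linear maps with the range of M₁ contained in the range of M₂, let m_{j,k} ∈ F_q be given for 1 ≤ k < j ≤ h, and let g_k : F_q^{k−1} → F_q be arbitrary functions for 1 ≤ k ≤ h. For a ∈ F_q^n and b ∈ F_q^{n'}, let Z(a,b) ∈ F_q^h be the unique vector satisfying Z(a,b)_j = (M₁a + M₂b)_j + Σ_{k<j} m_{j,k}·g_k(Z(a,b)₁,…,Z(a,b)_{k−1}) for all j. Then the distribution of Z(a,B) for uniformly distributed B ∈ F_q^{n'} does not depend on a; that is, for all a, a' ∈ F_q^n and all z ∈ F_q^h, the number of b ∈ F_q^{n'} with Z(a,b) = z equals the number of b with Z(a',b) = z. 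-/
/-- Secrecy against any deterministic attack: if the range of `M₁` is contained
in the range of `M₂`, then the wiretapped vector `Z(a, B)` defined by the causal
recurrence has a distribution independent of the messages `a` for uniform `B`. -/
theorem stmt_13 {F : Type*} [Field F] [Fintype F] [DecidableEq F]
    (q : ℕ) (hq : IsPrimePow q) (hcard : Fintype.card F = q)
    {n n' h : ℕ}
    (M₁ : (Fin n → F) →ₗ[F] (Fin h → F))
    (M₂ : (Fin n' → F) →ₗ[F] (Fin h → F))
    (hsec : ∀ a : Fin n → F, ∃ b : Fin n' → F, M₁ a = M₂ b)
    (m : Fin h → Fin h → F)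
    (g : (k : Fin h) → (Fin (k : ℕ) → F) → F)
    (Z : (Fin n → F) → (Fin n' → F) → (Fin h → F))
    (hZ : ∀ (a : Fin n → F) (b : Fin n' → F) (j : Fin h),
      Z a b j = (M₁ a + M₂ b) j +
        ∑ k ∈ Finset.univ.filter (fun k => k < j),
          m j k * g k (fun i => Z a b (Fin.castLE k.isLt.le i))) :
    ∀ (a a' : Fin n → F) (z : Fin h → F),
      (Finset.univ.filter fun b : Fin n' → F => Z a b = z).card =
      (Finset.univ.filter fun b : Fin n' → F => Z a' b = z).card := by
  -- Uniqueness: Z a b is determined by the vector M₁ a + M₂ b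
  have key : ∀ (a a' : Fin n → F) (b b' : Fin n' → F),
      M₁ a + M₂ b = M₁ a' + M₂ b' → Z a b = Z a' b' := by
    intro a a' b b' hw
    suffices H : ∀ N (j : Fin h), j.val < N → Z a b j = Z a' b' j by
      funext j; exact H (j.val + 1) j (Nat.lt_succ_self _)
    intro N
    induction N with
    | zero => intro j hj; omega
    | succ N ih =>
      intro j hj
      rw [hZ a b j, hZ a' b' j, hw]
      congr 1
      refine Finset.sum_congr rfl fun k hk => ?_
      simp only [Finset.mem_filter] at hk
      have hki : (k : ℕ) < (j : ℕ) := hk.2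
      have hfun : (fun i => Z a b (Fin.castLE k.isLt.le i)) =
          fun i => Z a' b' (Fin.castLE k.isLt.le i) := by
        funext i
        exact ih (Fin.castLE k.isLt.le i) (by simp [Fin.castLE]; omega)
      rw [hfun]
  intro a a' z
  obtain ⟨ba, hba⟩ := hsec a
  obtain ⟨ba', hba'⟩ := hsec a'
  set c := ba - ba' with hc
  have hshift : ∀ b : Fin n' → F, Z a b = Z a' (b + c) := by
    intro b
    apply key
    rw [hc, map_add, map_sub, ← hba, ← hba']
    abel
  refine Finset.card_bij' (fun b _ => b + c) (fun b _ => b - c) ?_ ?_ ?_ ?_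
  · intro b hb
    simp only [Finset.mem_filter, Finset.mem_univ, true_and] at hb ⊢
    rw [← hshift b]; exact hb
  · intro b hb
    simp only [Finset.mem_filter, Finset.mem_univ, true_and] at hb ⊢
    rw [hshift (b - c)]
    simpa using hb
  · intro b _; funext i; simp [hc]
  · intro b _; funext i; simp [hc]
end
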